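/- Let α ∈ (0,1), μ > 1/2, and D := ∂_φ − ∂_β. Let H : (0,∞) × 𝕋 → ℂ be C¹ with ‖H‖_{X₀} < ∞, and define F(β,φ) := 2μ β^{−2μ} ∫₀^β s^{2μ−1} H(s,φ) ds. Then: (i) the integral converges absolutely and H = F + (β/(2μ))∂_βF on (0,∞) × 𝕋; (ii) ‖β^{2μ}∂_β∂_φF‖_{C_β^α} + ‖β^{2μ}∂_βF‖_{C_β^α} + ‖β^{2μ−1}∂_φF‖_{C_β^α} + ‖β^{2μ−1}F‖_{C_β^α} ≤ C(α,μ)·‖H‖_{X₀} for a constant C(α,μ) depending only on α and μ; (iii) F is the unique function on (0,∞) × 𝕋, differentiable in β with β^{2μ−1}F bounded, satisfying H = F + (β/(2μ))∂_βF. -/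

import Mathlib

open MeasureTheory Filter Set
open scoped ENNReal
open scoped Topology

noncomputable def jap (β : ℝ) : ℝ := Real.sqrt (β ^ 2 + 1)

noncomputable def wSupNorm (w : ℝ → ℝ) (f : ℝ → ℝ → ℂ) : ℝ≥0∞ :=
  ⨆ (β : ℝ) (_ : 0 < β) (φ : ℝ), ENNReal.ofReal (w β * ‖f β φ‖)

noncomputable def holderSemi (α : ℝ) (f : ℝ → ℝ → ℂ) : ℝ≥0∞ :=
  ⨆ (φ : ℝ) (β₁ : ℝ) (β₂ : ℝ) (_ : 0 < β₂) (_ : β₂ < β₁) (_ : β₁ < 2 * β₂)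
      (_ : β₁ - β₂ < 1),
    ENNReal.ofReal ((β₁ + β₂) ^ α * ‖f β₁ φ - f β₂ φ‖ / (β₁ - β₂) ^ α)

noncomputable def CbNorm (α : ℝ) (f : ℝ → ℝ → ℂ) : ℝ≥0∞ :=
  wSupNorm (fun β => jap β ^ α) f + holderSemi α f

def Periodic2 (f : ℝ → ℝ → ℂ) : Prop := ∀ β φ, f β (φ + 2 * Real.pi) = f β φ

def ContOn2 (f : ℝ → ℝ → ℂ) : Prop :=
  ContinuousOn (fun p : ℝ × ℝ => f p.1 p.2) (Set.Ioi 0 ×ˢ Set.univ)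

noncomputable def X0Norm (α μ : ℝ) (H Hβ Hφ : ℝ → ℝ → ℂ) : ℝ≥0∞ :=
  CbNorm α (fun β φ => (β ^ (2*μ) : ℝ) • (Hφ β φ - Hβ β φ)) +
    CbNorm α (fun β φ => (β ^ (2*μ - 1) : ℝ) • Hφ β φ) +
    CbNorm α (fun β φ => (β ^ (2*μ - 1) : ℝ) • H β φ)

noncomputable def T0 (μ : ℝ) (H : ℝ → ℝ → ℂ) (β φ : ℝ) : ℂ :=
  (2 * μ * β ^ (-(2*μ)) : ℝ) • ∫ s in (0:ℝ)..β, (s ^ (2*μ - 1) : ℝ) • H s φ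


namespace S9


lemma jap_pos (β : ℝ) : 0 < jap β := Real.sqrt_pos.2 (by positivity)

lemma one_le_jap (β : ℝ) : 1 ≤ jap β := by
  have := Real.sqrt_le_sqrt (show (1:ℝ) ≤ β ^ 2 + 1 by nlinarith)
  simpa [jap] using this

lemma self_le_jap {β : ℝ} (hβ : 0 ≤ β) : β ≤ jap β := by
  have := Real.sqrt_le_sqrt (show β ^ 2 ≤ β ^ 2 + 1 by nlinarith)
  rwa [Real.sqrt_sq hβ] at this

lemma jap_le_two {β : ℝ} (h0 : 0 ≤ β) (h1 : β ≤ 1) : jap β ≤ 2 := by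
  have := Real.sqrt_le_sqrt (show β ^ 2 + 1 ≤ 2 ^ 2 by nlinarith)
  rwa [Real.sqrt_sq (by norm_num : (0:ℝ) ≤ 2)] at this

lemma jap_le_two_mul {β : ℝ} (h1 : 1 ≤ β) : jap β ≤ 2 * β := by
  have := Real.sqrt_le_sqrt (show β ^ 2 + 1 ≤ (2 * β) ^ 2 by nlinarith)
  rwa [Real.sqrt_sq (by nlinarith)] at this

lemma jap_cont : Continuous jap := Real.continuous_sqrt.comp (by continuity)

lemma jap_rpow_intble (α a b : ℝ) :
    IntervalIntegrable (fun s => jap s ^ (-α)) volume a b :=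
  (jap_cont.rpow_const fun x => Or.inl (jap_pos x).ne').intervalIntegrable a b

open intervalIntegral in
lemma jap_int_bound {α : ℝ} (hα : α ∈ Set.Ioo (0:ℝ) 1) {β : ℝ} (hβ : 0 < β) :
    (∫ s in (0:ℝ)..β, jap s ^ (-α)) ≤ 2/(1-α) * (β * jap β ^ (-α)) := by
  obtain ⟨hα0, hα1⟩ := hα
  have h1α : 0 < 1 - α := by linarith
  have hJpos : 0 < jap β ^ α := Real.rpow_pos_of_pos (jap_pos β) α
  rw [Real.rpow_neg (jap_pos β).le]
  rcases le_or_gt β 1 with hb1 | hb1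
  · have hstep : (∫ s in (0:ℝ)..β, jap s ^ (-α)) ≤ β := by
      have := integral_mono_on (μ := volume) hβ.le
        (jap_rpow_intble α 0 β) intervalIntegrable_const
        (g := fun _ => (1:ℝ))
        (fun x _ => Real.rpow_le_one_of_one_le_of_nonpos (one_le_jap x) (by linarith))
      simpa using this
    have hJ2 : jap β ^ α ≤ 2 := by
      calc jap β ^ α ≤ 2 ^ α := Real.rpow_le_rpow (jap_pos β).le (jap_le_two hβ.le hb1) hα0.le
      _ ≤ 2 ^ (1:ℝ) := Real.rpow_le_rpow_of_exponent_le one_le_two hα1.le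
      _ = 2 := Real.rpow_one 2
    refine hstep.trans ?_
    rw [show 2/(1-α) * (β * (jap β ^ α)⁻¹) = 2*β/((1-α) * jap β ^ α) by field_simp,
      le_div_iff₀ (by positivity)]
    nlinarith [mul_le_mul_of_nonneg_left hJ2 hβ.le, mul_nonneg hβ.le hJpos.le]
  · have hstep : (∫ s in (0:ℝ)..β, jap s ^ (-α)) ≤ β ^ (1-α) / (1-α) := by
      have hmono : (∫ s in (0:ℝ)..β, jap s ^ (-α)) ≤ ∫ s in (0:ℝ)..β, s ^ (-α) := by
        refine integral_mono_ae_restrict hβ.le (jap_rpow_intble α 0 β)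
          (intervalIntegrable_rpow' (by linarith)) ?_
        have h0 : ∀ᵐ (s:ℝ) ∂(volume.restrict (Icc 0 β)), s ≠ 0 := by
          refine ae_restrict_of_ae ?_
          rw [ae_iff]
          simp only [ne_eq, not_not, Set.setOf_eq_eq_singleton]
          exact measure_singleton 0
        filter_upwards [ae_restrict_mem measurableSet_Icc, h0] with s hs hs0
        have hs' : 0 < s := lt_of_le_of_ne hs.1 (Ne.symm hs0)
        exact Real.rpow_le_rpow_of_nonpos hs' (self_le_jap hs'.le) (by linarith)
      have hval : (∫ s in (0:ℝ)..β, s ^ (-α)) = β ^ (1-α) / (1-α) := by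
        rw [integral_rpow (Or.inl (by linarith))]
        rw [Real.zero_rpow (by linarith : -α + 1 ≠ 0)]
        norm_num
        rw [show -α + 1 = 1 - α by ring]
      rw [hval] at hmono; exact hmono
    refine hstep.trans ?_
    have hkey : jap β ^ α ≤ 2 * β ^ α := by
      calc jap β ^ α ≤ (2*β) ^ α := Real.rpow_le_rpow (jap_pos β).le (jap_le_two_mul hb1.le) hα0.le
      _ = 2 ^ α * β ^ α := Real.mul_rpow (by norm_num) (by positivity)
      _ ≤ 2 * β ^ α := by
          have : (2:ℝ) ^ α ≤ 2 ^ (1:ℝ) := Real.rpow_le_rpow_of_exponent_le one_le_two hα1.le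
          rw [Real.rpow_one] at this
          exact mul_le_mul_of_nonneg_right this (by positivity)
    have hprod : β ^ (1-α) * β ^ α = β := by
      rw [← Real.rpow_add hβ]; norm_num
    rw [show 2/(1-α) * (β * (jap β ^ α)⁻¹) = 2*β/((1-α) * jap β ^ α) by field_simp,
      div_le_div_iff₀ (by positivity) (by positivity)]
    have h1 : β ^ (1-α) * jap β ^ α ≤ β ^ (1-α) * (2 * β ^ α) :=
      mul_le_mul_of_nonneg_left hkey (by positivity)
    nlinarith [Real.rpow_pos_of_pos hβ (1-α)]

section core
variable {α μ : ℝ} {G : ℝ → ℝ → ℂ} {X : ℝ}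

lemma one_le_japα (hα0 : 0 ≤ α) (b : ℝ) : 1 ≤ jap b ^ α := by
  calc (1:ℝ) = 1 ^ α := (Real.one_rpow α).symm
  _ ≤ jap b ^ α := Real.rpow_le_rpow zero_le_one (one_le_jap b) hα0

lemma japα_mul_jap_neg (α b : ℝ) : jap b ^ α * jap b ^ (-α) = 1 := by
  rw [← Real.rpow_add (jap_pos b)]; simp

lemma sect_cont (hG : ContOn2 G) (φ : ℝ) :
    ContinuousOn (fun s => (s ^ (2*μ - 1) : ℝ) • G s φ) (Set.Ioi (0:ℝ)) := by
  apply ContinuousOn.smul (f := fun s => s ^ (2*μ - 1)) (g := fun s => G s φ)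
  · intro s hs
    exact (Real.continuousAt_rpow_const s _ (Or.inl (ne_of_gt hs))).continuousWithinAt
  · exact hG.comp ((continuous_id.prodMk continuous_const).continuousOn)
      (fun s hs => ⟨hs, trivial⟩)

lemma bd_weak (hbd : ∀ b φ', 0 < b → jap b ^ α * (b ^ (2*μ-1) * ‖G b φ'‖) ≤ X)
    {b : ℝ} (hb : 0 < b) (φ : ℝ) : b ^ (2*μ-1) * ‖G b φ‖ ≤ X * jap b ^ (-α) := by
  have h := hbd b φ hb
  rw [Real.rpow_neg (jap_pos b).le,
    show X * (jap b ^ α)⁻¹ = X / jap b ^ α by ring,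
    le_div_iff₀ (Real.rpow_pos_of_pos (jap_pos b) α), mul_comm]
  exact h

lemma bd_noweight (hα0 : 0 ≤ α)
    (hbd : ∀ b φ', 0 < b → jap b ^ α * (b ^ (2*μ-1) * ‖G b φ'‖) ≤ X)
    {b : ℝ} (hb : 0 < b) (φ : ℝ) : b ^ (2*μ-1) * ‖G b φ‖ ≤ X := by
  have h := hbd b φ hb
  have h1 := one_le_japα hα0 b
  nlinarith [mul_nonneg (Real.rpow_nonneg hb.le (2*μ-1)) (norm_nonneg (G b φ))]

lemma X_nonneg (hα0 : 0 ≤ α)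
    (hbd : ∀ b φ', 0 < b → jap b ^ α * (b ^ (2*μ-1) * ‖G b φ'‖) ≤ X) : 0 ≤ X := by
  refine le_trans ?_ (hbd 1 0 one_pos)
  exact mul_nonneg (Real.rpow_nonneg (jap_pos 1).le _)
    (mul_nonneg (Real.rpow_nonneg zero_le_one _) (norm_nonneg _))

lemma T0_intble (hG : ContOn2 G) (hα0 : 0 ≤ α)
    (hbd : ∀ b φ', 0 < b → jap b ^ α * (b ^ (2*μ-1) * ‖G b φ'‖) ≤ X)
    {β : ℝ} (hβ : 0 < β) (φ : ℝ) :
    IntervalIntegrable (fun s => (s ^ (2*μ - 1) : ℝ) • G s φ) volume 0 β := by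
  have hX := X_nonneg hα0 hbd
  rw [intervalIntegrable_iff_integrableOn_Ioc_of_le hβ.le]
  refine ⟨((sect_cont hG φ).mono Ioc_subset_Ioi_self).aestronglyMeasurable measurableSet_Ioc, ?_⟩
  apply HasFiniteIntegral.restrict_of_bounded (C := X) measure_Ioc_lt_top
  filter_upwards [ae_restrict_mem measurableSet_Ioc] with s hs
  have h := bd_weak hbd hs.1 φ
  rw [norm_smul, Real.norm_eq_abs, abs_of_nonneg (Real.rpow_nonneg hs.1.le _)]
  have hj : jap s ^ (-α) ≤ 1 :=
    Real.rpow_le_one_of_one_le_of_nonpos (one_le_jap s) (by linarith)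
  exact h.trans (mul_le_of_le_one_right hX hj)

lemma T0_bound (hα : α ∈ Set.Ioo (0:ℝ) 1) (hμ : 1/2 < μ) (hG : ContOn2 G)
    (hbd : ∀ b φ', 0 < b → jap b ^ α * (b ^ (2*μ-1) * ‖G b φ'‖) ≤ X)
    {β : ℝ} (hβ : 0 < β) (φ : ℝ) :
    jap β ^ α * (β ^ (2*μ-1) * ‖T0 μ G β φ‖) ≤ 4*μ/(1-α) * X := by
  obtain ⟨hα0, hα1⟩ := hα
  have hX := X_nonneg hα0.le hbd
  have hc : (0:ℝ) < 2*μ*β^(-(2*μ)) :=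
    mul_pos (by linarith) (Real.rpow_pos_of_pos hβ _)
  have hgint : IntervalIntegrable (fun s => X * jap s ^ (-α)) volume 0 β :=
    (jap_rpow_intble α 0 β).const_mul X
  have hle : ‖∫ s in (0:ℝ)..β, (s^(2*μ-1):ℝ) • G s φ‖
      ≤ |∫ s in (0:ℝ)..β, X * jap s ^ (-α)| := by
    apply intervalIntegral.norm_integral_le_abs_of_norm_le ?_ hgint
    rw [uIoc_of_le hβ.le]
    filter_upwards [ae_restrict_mem measurableSet_Ioc] with s hs
    rw [norm_smul, Real.norm_eq_abs, abs_of_nonneg (Real.rpow_nonneg hs.1.le _)]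
    exact bd_weak hbd hs.1 φ
  have habs : |∫ s in (0:ℝ)..β, X * jap s ^ (-α)|
      = X * ∫ s in (0:ℝ)..β, jap s ^ (-α) := by
    rw [intervalIntegral.integral_const_mul, abs_of_nonneg]
    exact mul_nonneg hX (intervalIntegral.integral_nonneg hβ.le
      (fun s _ => Real.rpow_nonneg (jap_pos s).le _))
  have hS : ‖∫ s in (0:ℝ)..β, (s^(2*μ-1):ℝ) • G s φ‖
      ≤ X * (2/(1-α) * (β * jap β ^ (-α))) := by
    refine hle.trans ?_
    rw [habs]
    exact mul_le_mul_of_nonneg_left (jap_int_bound ⟨hα0, hα1⟩ hβ) hX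
  have hnorm : ‖T0 μ G β φ‖
      = (2*μ*β^(-(2*μ))) * ‖∫ s in (0:ℝ)..β, (s^(2*μ-1):ℝ) • G s φ‖ := by
    rw [T0, norm_smul, Real.norm_eq_abs, abs_of_pos hc]
  have hpow : β ^ (2*μ-1) * β ^ (-(2*μ)) * β = 1 := by
    rw [← Real.rpow_add hβ, ← Real.rpow_add_one hβ.ne',
      show 2*μ-1 + -(2*μ) + 1 = 0 by ring, Real.rpow_zero]
  calc jap β ^ α * (β^(2*μ-1) * ‖T0 μ G β φ‖)
      ≤ jap β ^ α * (β^(2*μ-1) * ((2*μ*β^(-(2*μ))) * (X * (2/(1-α) * (β * jap β ^ (-α)))))) := by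
        rw [hnorm]
        exact mul_le_mul_of_nonneg_left (mul_le_mul_of_nonneg_left
          (mul_le_mul_of_nonneg_left hS hc.le) (Real.rpow_nonneg hβ.le _))
          (Real.rpow_nonneg (jap_pos β).le _)
    _ = (β^(2*μ-1) * β^(-(2*μ)) * β) * (jap β ^ α * jap β ^ (-α)) * (2*μ*X*(2/(1-α))) := by
        ring
    _ = 4*μ/(1-α) * X := by rw [hpow, japα_mul_jap_neg]; ring

lemma T0_deriv (hμ : 1/2 < μ) (hG : ContOn2 G) (hα0 : 0 ≤ α)
    (hbd : ∀ b φ', 0 < b → jap b ^ α * (b ^ (2*μ-1) * ‖G b φ'‖) ≤ X)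
    {β : ℝ} (hβ : 0 < β) (φ : ℝ) :
    HasDerivAt (fun b => T0 μ G b φ) ((2*μ/β : ℝ) • (G β φ - T0 μ G β φ)) β := by
  have hI : HasDerivAt (fun b => ∫ s in (0:ℝ)..b, (s^(2*μ-1):ℝ) • G s φ)
      ((β^(2*μ-1):ℝ) • G β φ) β := by
    refine intervalIntegral.integral_hasDerivAt_right (T0_intble hG hα0 hbd hβ φ)
      ⟨Set.Ioi 0, Ioi_mem_nhds hβ, (sect_cont hG φ).aestronglyMeasurable measurableSet_Ioi⟩ ?_
    exact (sect_cont hG φ).continuousAt (Ioi_mem_nhds hβ)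
  have hc : HasDerivAt (fun b:ℝ => 2*μ*b^(-(2*μ))) (2*μ*(-(2*μ)*β^(-(2*μ)-1))) β :=
    (Real.hasDerivAt_rpow_const (Or.inl hβ.ne')).const_mul (2*μ)
  have h := hc.smul hI
  have k1 : β^(-(2*μ)) * β^(2*μ-1) = β⁻¹ := by
    rw [← Real.rpow_add hβ, show -(2*μ) + (2*μ-1) = -1 by ring, Real.rpow_neg_one]
  have k2 : β^(-(2*μ)-1) = β^(-(2*μ)) * β⁻¹ := by
    rw [show -(2*μ)-1 = -(2*μ) + (-1) by ring, Real.rpow_add hβ, Real.rpow_neg_one]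
  have hβC : (β:ℂ) ≠ 0 := Complex.ofReal_ne_zero.2 hβ.ne'
  have K1 : ((β^(-(2*μ)) : ℝ) : ℂ) * ((β^(2*μ-1) : ℝ) : ℂ) * (β:ℂ) = 1 := by
    rw [← Complex.ofReal_mul, k1, ← Complex.ofReal_mul, inv_mul_cancel₀ hβ.ne',
      Complex.ofReal_one]
  have K2 : ((β^(-(2*μ)-1) : ℝ) : ℂ) = ((β^(-(2*μ)) : ℝ) : ℂ) * (β:ℂ)⁻¹ := by
    rw [← Complex.ofReal_inv, ← Complex.ofReal_mul, k2]
  convert h using 1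
  · rfl
  · rfl
  simp only [T0, Complex.real_smul, Complex.ofReal_mul, Complex.ofReal_div,
    Complex.ofReal_neg, Complex.ofReal_ofNat]
  rw [K2]
  field_simp
  ring_nf
  ring_nf at K1
  linear_combination ((-1)*(μ:ℂ)*G β φ) * K1

lemma T0_phi_deriv {Gφ : ℝ → ℝ → ℂ} {Y : ℝ} (hH : ContOn2 G) (hHφ : ContOn2 Gφ) (hα0 : 0 ≤ α)
    (hbdH : ∀ b φ', 0 < b → jap b ^ α * (b ^ (2*μ-1) * ‖G b φ'‖) ≤ X)
    (hbdφ : ∀ b φ', 0 < b → jap b ^ α * (b ^ (2*μ-1) * ‖Gφ b φ'‖) ≤ Y)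
    (hdφ : ∀ b p, 0 < b → HasDerivAt (fun q => G b q) (Gφ b p) p)
    {β : ℝ} (hβ : 0 < β) (φ : ℝ) :
    HasDerivAt (fun p => T0 μ G β p) (T0 μ Gφ β φ) φ := by
  have hYnn := X_nonneg hα0 hbdφ
  have hmeas : ∀ x : ℝ, AEStronglyMeasurable (fun t => (t ^ (2*μ-1) : ℝ) • G t x)
      (volume.restrict (Set.uIoc (0:ℝ) β)) := by
    intro x
    rw [uIoc_of_le hβ.le]
    exact ((sect_cont hH x).mono Ioc_subset_Ioi_self).aestronglyMeasurable measurableSet_Ioc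
  have hmeas' : AEStronglyMeasurable (fun t => (t ^ (2*μ-1) : ℝ) • Gφ t φ)
      (volume.restrict (Set.uIoc (0:ℝ) β)) := by
    rw [uIoc_of_le hβ.le]
    exact ((sect_cont hHφ φ).mono Ioc_subset_Ioi_self).aestronglyMeasurable measurableSet_Ioc
  have key := intervalIntegral.hasDerivAt_integral_of_dominated_loc_of_deriv_le
    (F := fun x t => (t ^ (2*μ-1) : ℝ) • G t x) (F' := fun x t => (t ^ (2*μ-1) : ℝ) • Gφ t x)
    (bound := fun _ => Y) (μ := volume) (a := 0) (b := β) (x₀ := φ) (s := Set.univ) Filter.univ_mem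
    (Eventually.of_forall hmeas) (T0_intble hH hα0 hbdH hβ φ) hmeas' ?_
    intervalIntegrable_const ?_
  · exact key.2.const_smul ((2*μ*β^(-(2*μ)) : ℝ))
  · refine Eventually.of_forall (fun t ht x _ => ?_)
    rw [uIoc_of_le hβ.le] at ht
    rw [norm_smul, Real.norm_eq_abs, abs_of_nonneg (Real.rpow_nonneg ht.1.le _)]
    have h := bd_weak hbdφ ht.1 x
    have hj : jap t ^ (-α) ≤ 1 :=
      Real.rpow_le_one_of_one_le_of_nonpos (one_le_jap t) (by linarith)
    exact h.trans (mul_le_of_le_one_right hYnn hj)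
  · refine Eventually.of_forall (fun t ht x _ => ?_)
    rw [uIoc_of_le hβ.le] at ht
    exact (hdφ t x ht.1).const_smul ((t ^ (2*μ-1) : ℝ))

lemma Qarith {a b M D : ℝ} (hα : α ∈ Set.Ioo (0:ℝ) 1) (hb : 0 < b) (hba : b < a)
    (hab : a < 2*b) (had : a - b < 1) (hM : 0 ≤ M)
    (hDle : D ≤ M / b * (a - b)) :
    (a+b)^α * D / (a-b)^α ≤ 3*M := by
  obtain ⟨hα0, hα1⟩ := hα
  have hd0 : 0 < a - b := by linarith
  have hsum : (0:ℝ) < a + b := by linarith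
  rw [div_le_iff₀ (Real.rpow_pos_of_pos hd0 α)]
  have hkey : (a+b)^α * (a-b)^(1-α) ≤ 3*b := by
    have h3 : (a+b)^α ≤ 3 * b^α := by
      calc (a+b)^α ≤ (3*b)^α := Real.rpow_le_rpow hsum.le (by linarith) hα0.le
      _ = 3^α * b^α := Real.mul_rpow (by norm_num) hb.le
      _ ≤ 3 * b^α := by
          have h33 : (3:ℝ)^α ≤ 3^(1:ℝ) :=
            Real.rpow_le_rpow_of_exponent_le (by norm_num) hα1.le
          rw [Real.rpow_one] at h33
          exact mul_le_mul_of_nonneg_right h33 (Real.rpow_nonneg hb.le α)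
    rcases le_or_gt b 1 with hb1 | hb1
    · have h4 : (a-b)^(1-α) ≤ b^(1-α) :=
        Real.rpow_le_rpow hd0.le (by linarith) (by linarith)
      calc (a+b)^α * (a-b)^(1-α) ≤ (3*b^α) * b^(1-α) :=
          mul_le_mul h3 h4 (Real.rpow_nonneg hd0.le _) (by positivity)
      _ = 3 * (b^α * b^(1-α)) := by ring
      _ = 3 * b := by rw [← Real.rpow_add hb]; norm_num
    · have h4 : (a-b)^(1-α) ≤ 1 := Real.rpow_le_one hd0.le (by linarith) (by linarith)
      have h5 : b^α ≤ b := by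
        have h55 := Real.rpow_le_rpow_of_exponent_le hb1.le hα1.le
        rwa [Real.rpow_one] at h55
      calc (a+b)^α * (a-b)^(1-α) ≤ (3*b^α) * 1 :=
          mul_le_mul h3 h4 (Real.rpow_nonneg hd0.le _) (by positivity)
      _ = 3 * b^α := by ring
      _ ≤ 3*b := by linarith
  have hsplit : (a-b)^(1-α) * (a-b)^α = a - b := by
    rw [← Real.rpow_add hd0]; norm_num
  calc (a+b)^α * D ≤ (a+b)^α * (M/b*(a-b)) :=
      mul_le_mul_of_nonneg_left hDle (Real.rpow_nonneg hsum.le α)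
  _ = (M/b) * ((a+b)^α * (a-b)^(1-α)) * (a-b)^α := by
      linear_combination (-(M/b)*(a+b)^α) * hsplit
  _ ≤ (M/b) * (3*b) * (a-b)^α := by
      have h0 : 0 ≤ M/b := div_nonneg hM hb.le
      exact mul_le_mul_of_nonneg_right (mul_le_mul_of_nonneg_left hkey h0)
        (Real.rpow_nonneg hd0.le α)
  _ = 3*M*(a-b)^α := by field_simp

lemma MVbound {g g' : ℝ → ℂ} {M β₁ β₂ : ℝ} (h2 : 0 < β₂) (h21 : β₂ < β₁)
    (hder : ∀ b ∈ Icc β₂ β₁, HasDerivAt g (g' b) b)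
    (hbd : ∀ b ∈ Icc β₂ β₁, b * ‖g' b‖ ≤ M) :
    ‖g β₁ - g β₂‖ ≤ M / β₂ * (β₁ - β₂) := by
  have hC : ∀ b ∈ Icc β₂ β₁, ‖g' b‖ ≤ M / β₂ := by
    intro b hb
    rw [le_div_iff₀ h2]
    calc ‖g' b‖ * β₂ ≤ ‖g' b‖ * b := mul_le_mul_of_nonneg_left hb.1 (norm_nonneg _)
    _ = b * ‖g' b‖ := mul_comm _ _
    _ ≤ M := hbd b hb
  have h := Convex.norm_image_sub_le_of_norm_hasDerivWithin_le
    (fun b hb => (hder b hb).hasDerivWithinAt) hC (convex_Icc β₂ β₁)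
    (left_mem_Icc.2 h21.le) (right_mem_Icc.2 h21.le)
  rwa [Real.norm_eq_abs, abs_of_pos (by linarith : (0:ℝ) < β₁ - β₂)] at h

lemma T0_smul_deriv (hμ : 1/2 < μ) (hG : ContOn2 G) (hα0 : 0 ≤ α)
    (hbd : ∀ b φ', 0 < b → jap b ^ α * (b ^ (2*μ-1) * ‖G b φ'‖) ≤ X)
    {b : ℝ} (hb : 0 < b) (φ : ℝ) :
    HasDerivAt (fun x => (x ^ (2*μ-1) : ℝ) • T0 μ G x φ)
      ((b ^ (2*μ-1) : ℝ) • ((2*μ/b : ℝ) • (G b φ - T0 μ G b φ))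
        + ((2*μ-1) * b ^ (2*μ-1-1) : ℝ) • T0 μ G b φ) b :=
  (Real.hasDerivAt_rpow_const (p := 2*μ-1) (Or.inl hb.ne')).smul (T0_deriv hμ hG hα0 hbd hb φ)

lemma T0_deriv_norm_bound (hα : α ∈ Set.Ioo (0:ℝ) 1) (hμ : 1/2 < μ) (hG : ContOn2 G)
    (hbd : ∀ b φ', 0 < b → jap b ^ α * (b ^ (2*μ-1) * ‖G b φ'‖) ≤ X)
    {b : ℝ} (hb : 0 < b) (φ : ℝ) :
    b * ‖(b ^ (2*μ-1) : ℝ) • ((2*μ/b : ℝ) • (G b φ - T0 μ G b φ))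
        + ((2*μ-1) * b ^ (2*μ-1-1) : ℝ) • T0 μ G b φ‖
      ≤ ((2*μ-1) * (4*μ/(1-α)) + 2*μ*(1 + 4*μ/(1-α))) * X := by
  obtain ⟨hα0, hα1⟩ := hα
  have hX := X_nonneg hα0.le hbd
  have hT : b ^ (2*μ-1) * ‖T0 μ G b φ‖ ≤ 4*μ/(1-α) * X := by
    have h := T0_bound ⟨hα0, hα1⟩ hμ hG hbd hb φ
    have h1 := one_le_japα hα0.le b
    nlinarith [mul_nonneg (Real.rpow_nonneg hb.le (2*μ-1)) (norm_nonneg (T0 μ G b φ))]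
  have hGb : b ^ (2*μ-1) * ‖G b φ‖ ≤ X := bd_noweight hα0.le hbd hb φ
  have n1 : ‖((2*μ-1) * b ^ (2*μ-1-1) : ℝ) • T0 μ G b φ‖
      = (2*μ-1) * b^(2*μ-1-1) * ‖T0 μ G b φ‖ := by
    rw [norm_smul, Real.norm_eq_abs, abs_of_nonneg
      (mul_nonneg (by linarith) (Real.rpow_nonneg hb.le _))]
  have n2 : ‖(b ^ (2*μ-1) : ℝ) • ((2*μ/b : ℝ) • (G b φ - T0 μ G b φ))‖
      = b^(2*μ-1) * (2*μ/b * ‖G b φ - T0 μ G b φ‖) := by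
    rw [norm_smul, norm_smul, Real.norm_eq_abs, Real.norm_eq_abs,
      abs_of_nonneg (Real.rpow_nonneg hb.le _),
      abs_of_nonneg (div_nonneg (by linarith) hb.le)]
  have hexp : b ^ (2*μ-1-1) = b ^ (2*μ-1) * b⁻¹ := by
    rw [show 2*μ-1-1 = (2*μ-1) + (-1) by ring, Real.rpow_add hb, Real.rpow_neg_one]
  have hsub : b^(2*μ-1) * ‖G b φ - T0 μ G b φ‖
      ≤ X + 4*μ/(1-α) * X := by
    calc b^(2*μ-1) * ‖G b φ - T0 μ G b φ‖
        ≤ b^(2*μ-1) * (‖G b φ‖ + ‖T0 μ G b φ‖) :=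
        mul_le_mul_of_nonneg_left (norm_sub_le _ _) (Real.rpow_nonneg hb.le _)
    _ = b^(2*μ-1) * ‖G b φ‖ + b^(2*μ-1) * ‖T0 μ G b φ‖ := by ring
    _ ≤ X + 4*μ/(1-α) * X := add_le_add hGb hT
  calc b * ‖(b ^ (2*μ-1) : ℝ) • ((2*μ/b : ℝ) • (G b φ - T0 μ G b φ))
        + ((2*μ-1) * b ^ (2*μ-1-1) : ℝ) • T0 μ G b φ‖
      ≤ b * (‖(b ^ (2*μ-1) : ℝ) • ((2*μ/b : ℝ) • (G b φ - T0 μ G b φ))‖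
        + ‖((2*μ-1) * b ^ (2*μ-1-1) : ℝ) • T0 μ G b φ‖) :=
      mul_le_mul_of_nonneg_left (norm_add_le _ _) hb.le
  _ = (2*μ-1) * (b^(2*μ-1) * ‖T0 μ G b φ‖)
        + 2*μ * (b^(2*μ-1) * ‖G b φ - T0 μ G b φ‖) := by
      rw [n1, n2, hexp]
      field_simp
      ring
  _ ≤ (2*μ-1) * (4*μ/(1-α) * X) + 2*μ * (X + 4*μ/(1-α) * X) := by
      have e1 := mul_le_mul_of_nonneg_left hT (show (0:ℝ) ≤ 2*μ-1 by linarith)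
      have e2 := mul_le_mul_of_nonneg_left hsub (show (0:ℝ) ≤ 2*μ by linarith)
      linarith
  _ = ((2*μ-1) * (4*μ/(1-α)) + 2*μ*(1 + 4*μ/(1-α))) * X := by ring

lemma T0_holder (hα : α ∈ Set.Ioo (0:ℝ) 1) (hμ : 1/2 < μ) (hG : ContOn2 G)
    (hbd : ∀ b φ', 0 < b → jap b ^ α * (b ^ (2*μ-1) * ‖G b φ'‖) ≤ X)
    {β₁ β₂ : ℝ} (h2 : 0 < β₂) (h21 : β₂ < β₁) (h12 : β₁ < 2*β₂)
    (hd1 : β₁ - β₂ < 1) (φ : ℝ) :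
    (β₁+β₂)^α * ‖(β₁ ^ (2*μ-1) : ℝ) • T0 μ G β₁ φ - (β₂ ^ (2*μ-1) : ℝ) • T0 μ G β₂ φ‖
        / (β₁-β₂)^α
      ≤ 3 * (((2*μ-1) * (4*μ/(1-α)) + 2*μ*(1 + 4*μ/(1-α))) * X) := by
  have hX := X_nonneg hα.1.le hbd
  have hMnn : 0 ≤ ((2*μ-1) * (4*μ/(1-α)) + 2*μ*(1 + 4*μ/(1-α))) * X := by
    have hB : 0 < 4*μ/(1-α) := div_pos (by linarith) (by linarith [hα.2])
    have hc : 0 ≤ (2*μ-1)*(4*μ/(1-α)) + 2*μ*(1+4*μ/(1-α)) := by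
      have e1 := mul_nonneg (show (0:ℝ) ≤ 2*μ-1 by linarith) hB.le
      have e2 := mul_nonneg (show (0:ℝ) ≤ 2*μ by linarith)
        (show (0:ℝ) ≤ 1 + 4*μ/(1-α) by linarith)
      linarith
    exact mul_nonneg hc hX
  refine Qarith hα h2 h21 h12 hd1 hMnn ?_
  exact MVbound (g := fun x => (x ^ (2*μ-1) : ℝ) • T0 μ G x φ)
    (g' := fun b => (b ^ (2*μ-1) : ℝ) • ((2*μ/b : ℝ) • (G b φ - T0 μ G b φ))
      + ((2*μ-1) * b ^ (2*μ-1-1) : ℝ) • T0 μ G b φ) h2 h21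
    (fun b hb => T0_smul_deriv hμ hG hα.1.le hbd (lt_of_lt_of_le h2 hb.1) φ)
    (fun b hb => T0_deriv_norm_bound hα hμ hG hbd (lt_of_lt_of_le h2 hb.1) φ)

lemma T0_bound' (hα : α ∈ Set.Ioo (0:ℝ) 1) (hμ : 1/2 < μ) (hG : ContOn2 G)
    (hbd : ∀ b φ', 0 < b → jap b ^ α * (b ^ (2*μ-1) * ‖G b φ'‖) ≤ X)
    {b : ℝ} (hb : 0 < b) (φ : ℝ) :
    b ^ (2*μ-1) * ‖T0 μ G b φ‖ ≤ 4*μ/(1-α) * X := by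
  have h := T0_bound hα hμ hG hbd hb φ
  have h1 := one_le_japα hα.1.le b
  nlinarith [mul_nonneg (Real.rpow_nonneg hb.le (2*μ-1)) (norm_nonneg (T0 μ G b φ))]

lemma cb_le {α : ℝ} {f : ℝ → ℝ → ℂ} {c1 c2 : ℝ} (h1 : 0 ≤ c1) (h2 : 0 ≤ c2)
    (hw : ∀ b φ, 0 < b → jap b ^ α * ‖f b φ‖ ≤ c1)
    (hq : ∀ φ b₁ b₂, 0 < b₂ → b₂ < b₁ → b₁ < 2*b₂ → b₁ - b₂ < 1 →
      (b₁+b₂)^α * ‖f b₁ φ - f b₂ φ‖ / (b₁-b₂)^α ≤ c2) :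
    CbNorm α f ≤ ENNReal.ofReal (c1 + c2) := by
  rw [CbNorm, ENNReal.ofReal_add h1 h2]
  refine add_le_add ?_ ?_
  · refine iSup_le fun b => iSup_le fun hb => iSup_le fun φ => ?_
    exact ENNReal.ofReal_le_ofReal (hw b φ hb)
  · refine iSup_le fun φ => iSup_le fun b₁ => iSup_le fun b₂ => iSup_le fun g1 =>
      iSup_le fun g2 => iSup_le fun g3 => iSup_le fun g4 => ?_
    exact ENNReal.ofReal_le_ofReal (hq φ b₁ b₂ g1 g2 g3 g4)

lemma smul_diff_bound {J P nd n1 n2 X1 X2 m : ℝ} (hJ : 0 ≤ J) (hP : 0 ≤ P) (hm : 0 ≤ m)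
    (hnd : nd ≤ n1 + n2) (h1 : J*(P*n1) ≤ X1) (h2 : J*(P*n2) ≤ X2) :
    J * (m*P*nd) ≤ m*(X1+X2) := by
  have a1 := mul_le_mul_of_nonneg_left (mul_le_mul_of_nonneg_left hnd (mul_nonneg hJ hP)) hm
  have a2 := mul_le_mul_of_nonneg_left h1 hm
  have a3 := mul_le_mul_of_nonneg_left h2 hm
  nlinarith [a1, a2, a3]

lemma Qsum {a d m nd n1 n2 q1 q2 : ℝ} (ha : 0 ≤ a) (hd : 0 < d) (hm : 0 ≤ m)
    (hnd : nd ≤ m*(n1+n2)) (h1 : a*n1/d ≤ q1) (h2 : a*n2/d ≤ q2) :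
    a*nd/d ≤ m*q1 + m*q2 := by
  rw [div_le_iff₀ hd] at h1 h2 ⊢
  nlinarith [mul_le_mul_of_nonneg_left hnd ha, mul_le_mul_of_nonneg_left h1 hm,
    mul_le_mul_of_nonneg_left h2 hm]

end core
end S9

open S9 in
theorem statement9 (α μ : ℝ) (hα : α ∈ Set.Ioo (0:ℝ) 1) (hμ : 1/2 < μ) :
    ∃ C > (0:ℝ), ∀ H Hβ Hφ : ℝ → ℝ → ℂ,
      ContOn2 H → ContOn2 Hβ → ContOn2 Hφ → Periodic2 H →
      (∀ β φ : ℝ, 0 < β → HasDerivAt (fun b => H b φ) (Hβ β φ) β) →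
      (∀ β φ : ℝ, 0 < β → HasDerivAt (fun p => H β p) (Hφ β φ) φ) →
      X0Norm α μ H Hβ Hφ < ⊤ →
      ((∀ β φ : ℝ, 0 < β →
          IntervalIntegrable (fun s => (s ^ (2*μ - 1) : ℝ) • H s φ)
            MeasureTheory.volume 0 β) ∧
        (∃ Fβ Fφ Fβφ : ℝ → ℝ → ℂ,
          (∀ β φ : ℝ, 0 < β → HasDerivAt (fun b => T0 μ H b φ) (Fβ β φ) β) ∧
          (∀ β φ : ℝ, 0 < β → HasDerivAt (fun p => T0 μ H β p) (Fφ β φ) φ) ∧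
          (∀ β φ : ℝ, 0 < β → HasDerivAt (fun b => Fφ b φ) (Fβφ β φ) β) ∧
          (∀ β φ : ℝ, 0 < β → H β φ = T0 μ H β φ + ((β / (2*μ) : ℝ)) • Fβ β φ) ∧
          CbNorm α (fun β φ => (β ^ (2*μ) : ℝ) • Fβφ β φ) +
              CbNorm α (fun β φ => (β ^ (2*μ) : ℝ) • Fβ β φ) +
              CbNorm α (fun β φ => (β ^ (2*μ - 1) : ℝ) • Fφ β φ) +
              CbNorm α (fun β φ => (β ^ (2*μ - 1) : ℝ) • T0 μ H β φ) ≤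
            ENNReal.ofReal C * X0Norm α μ H Hβ Hφ) ∧
        (∀ G Gβ : ℝ → ℝ → ℂ,
          (∀ β φ : ℝ, 0 < β → HasDerivAt (fun b => G b φ) (Gβ β φ) β) →
          (∃ M : ℝ, ∀ β φ : ℝ, 0 < β → ‖(β ^ (2*μ - 1) : ℝ) • G β φ‖ ≤ M) →
          (∀ β φ : ℝ, 0 < β → H β φ = G β φ + ((β / (2*μ) : ℝ)) • Gβ β φ) →
          ∀ β φ : ℝ, 0 < β → G β φ = T0 μ H β φ)) := by
  obtain ⟨hα0, hα1⟩ := hα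
  have h1α : 0 < 1 - α := by linarith
  set B : ℝ := 4*μ/(1-α) with hBdef
  have hBpos : 0 < B := div_pos (by linarith) h1α
  set MT : ℝ := (2*μ-1) * (4*μ/(1-α)) + 2*μ*(1 + 4*μ/(1-α)) with hMTdef
  have hMTpos : 0 < MT := by
    have e1 := mul_nonneg (show (0:ℝ) ≤ 2*μ-1 by linarith) hBpos.le
    have e2 : (0:ℝ) < 2*μ*(1 + 4*μ/(1-α)) :=
      mul_pos (by linarith) (by linarith)
    rw [hMTdef]; rw [hBdef] at e1; linarith
  refine ⟨8*μ + 4*μ*B + 12*μ*MT + 2*B + 6*MT + 1, by nlinarith, ?_⟩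
  intro H Hβ Hφ hH hHβ hHφ hper hdβ hdφ hN
  set X : ℝ := (X0Norm α μ H Hβ Hφ).toReal with hXdef
  have hXnn : 0 ≤ X := ENNReal.toReal_nonneg
  -- extraction of sup bounds
  have hextr : ∀ v : ℝ, ENNReal.ofReal v ≤ X0Norm α μ H Hβ Hφ → v ≤ X :=
    fun v hv => (ENNReal.ofReal_le_iff_le_toReal hN.ne).1 hv
  have hsupφ : ∀ b φ', 0 < b → jap b ^ α * (b ^ (2*μ-1) * ‖Hφ b φ'‖) ≤ X := by
    intro b φ' hb
    have h1 : ENNReal.ofReal (jap b ^ α * ‖(b ^ (2*μ-1) : ℝ) • Hφ b φ'‖)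
        ≤ X0Norm α μ H Hβ Hφ := by
      have hs : ENNReal.ofReal (jap b ^ α * ‖(b ^ (2*μ-1) : ℝ) • Hφ b φ'‖)
          ≤ wSupNorm (fun β => jap β ^ α) (fun β φ => (β ^ (2*μ - 1) : ℝ) • Hφ β φ) := by
        rw [wSupNorm]
        apply le_iSup_of_le b
        apply le_iSup_of_le hb
        apply le_iSup_of_le φ'
        exact le_rfl
      have hc : wSupNorm (fun β => jap β ^ α) (fun β φ => (β ^ (2*μ - 1) : ℝ) • Hφ β φ)
          ≤ CbNorm α (fun β φ => (β ^ (2*μ - 1) : ℝ) • Hφ β φ) := by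
        rw [CbNorm]; exact le_self_add
      have hx : CbNorm α (fun β φ => (β ^ (2*μ - 1) : ℝ) • Hφ β φ)
          ≤ X0Norm α μ H Hβ Hφ := by
        rw [X0Norm]; exact le_trans le_add_self le_self_add
      exact hs.trans (hc.trans hx)
    have h2 := hextr _ h1
    rwa [norm_smul, Real.norm_eq_abs, abs_of_nonneg (Real.rpow_nonneg hb.le _)] at h2
  have hsupH : ∀ b φ', 0 < b → jap b ^ α * (b ^ (2*μ-1) * ‖H b φ'‖) ≤ X := by
    intro b φ' hb
    have h1 : ENNReal.ofReal (jap b ^ α * ‖(b ^ (2*μ-1) : ℝ) • H b φ'‖)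
        ≤ X0Norm α μ H Hβ Hφ := by
      have hs : ENNReal.ofReal (jap b ^ α * ‖(b ^ (2*μ-1) : ℝ) • H b φ'‖)
          ≤ wSupNorm (fun β => jap β ^ α) (fun β φ => (β ^ (2*μ - 1) : ℝ) • H β φ) := by
        rw [wSupNorm]
        apply le_iSup_of_le b
        apply le_iSup_of_le hb
        apply le_iSup_of_le φ'
        exact le_rfl
      have hc : wSupNorm (fun β => jap β ^ α) (fun β φ => (β ^ (2*μ - 1) : ℝ) • H β φ)
          ≤ CbNorm α (fun β φ => (β ^ (2*μ - 1) : ℝ) • H β φ) := by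
        rw [CbNorm]; exact le_self_add
      have hx : CbNorm α (fun β φ => (β ^ (2*μ - 1) : ℝ) • H β φ)
          ≤ X0Norm α μ H Hβ Hφ := by
        rw [X0Norm]; exact le_add_self
      exact hs.trans (hc.trans hx)
    have h2 := hextr _ h1
    rwa [norm_smul, Real.norm_eq_abs, abs_of_nonneg (Real.rpow_nonneg hb.le _)] at h2
  have hqφ : ∀ φ' b₁ b₂, 0 < b₂ → b₂ < b₁ → b₁ < 2*b₂ → b₁ - b₂ < 1 →
      (b₁+b₂)^α * ‖(b₁^(2*μ-1):ℝ) • Hφ b₁ φ' - (b₂^(2*μ-1):ℝ) • Hφ b₂ φ'‖ / (b₁-b₂)^α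
        ≤ X := by
    intro φ' b₁ b₂ g1 g2 g3 g4
    refine hextr _ ?_
    have hs : ENNReal.ofReal ((b₁+b₂)^α * ‖(b₁^(2*μ-1):ℝ) • Hφ b₁ φ'
          - (b₂^(2*μ-1):ℝ) • Hφ b₂ φ'‖ / (b₁-b₂)^α)
        ≤ holderSemi α (fun β φ => (β ^ (2*μ - 1) : ℝ) • Hφ β φ) := by
      rw [holderSemi]
      apply le_iSup_of_le φ'
      apply le_iSup_of_le b₁
      apply le_iSup_of_le b₂
      apply le_iSup_of_le g1
      apply le_iSup_of_le g2
      apply le_iSup_of_le g3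
      apply le_iSup_of_le g4
      exact le_rfl
    have hc : holderSemi α (fun β φ => (β ^ (2*μ - 1) : ℝ) • Hφ β φ)
        ≤ CbNorm α (fun β φ => (β ^ (2*μ - 1) : ℝ) • Hφ β φ) := by
      rw [CbNorm]; exact le_add_self
    have hx : CbNorm α (fun β φ => (β ^ (2*μ - 1) : ℝ) • Hφ β φ)
        ≤ X0Norm α μ H Hβ Hφ := by
      rw [X0Norm]; exact le_trans le_add_self le_self_add
    exact hs.trans (hc.trans hx)
  have hqH : ∀ φ' b₁ b₂, 0 < b₂ → b₂ < b₁ → b₁ < 2*b₂ → b₁ - b₂ < 1 →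
      (b₁+b₂)^α * ‖(b₁^(2*μ-1):ℝ) • H b₁ φ' - (b₂^(2*μ-1):ℝ) • H b₂ φ'‖ / (b₁-b₂)^α
        ≤ X := by
    intro φ' b₁ b₂ g1 g2 g3 g4
    refine hextr _ ?_
    have hs : ENNReal.ofReal ((b₁+b₂)^α * ‖(b₁^(2*μ-1):ℝ) • H b₁ φ'
          - (b₂^(2*μ-1):ℝ) • H b₂ φ'‖ / (b₁-b₂)^α)
        ≤ holderSemi α (fun β φ => (β ^ (2*μ - 1) : ℝ) • H β φ) := by
      rw [holderSemi]
      apply le_iSup_of_le φ'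
      apply le_iSup_of_le b₁
      apply le_iSup_of_le b₂
      apply le_iSup_of_le g1
      apply le_iSup_of_le g2
      apply le_iSup_of_le g3
      apply le_iSup_of_le g4
      exact le_rfl
    have hc : holderSemi α (fun β φ => (β ^ (2*μ - 1) : ℝ) • H β φ)
        ≤ CbNorm α (fun β φ => (β ^ (2*μ - 1) : ℝ) • H β φ) := by
      rw [CbNorm]; exact le_add_self
    have hx : CbNorm α (fun β φ => (β ^ (2*μ - 1) : ℝ) • H β φ)
        ≤ X0Norm α μ H Hβ Hφ := by
      rw [X0Norm]; exact le_add_self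
    exact hs.trans (hc.trans hx)
  refine ⟨fun β φ hb => S9.T0_intble hH hα0.le hsupH hb φ,
    ⟨fun β φ => ((2*μ/β : ℝ)) • (H β φ - T0 μ H β φ),
     fun β φ => T0 μ Hφ β φ,
     fun β φ => ((2*μ/β : ℝ)) • (Hφ β φ - T0 μ Hφ β φ), ?_, ?_, ?_, ?_, ?_⟩, ?_⟩
  · exact fun β φ hb => S9.T0_deriv hμ hH hα0.le hsupH hb φ
  · exact fun β φ hb =>
      S9.T0_phi_deriv hH hHφ hα0.le hsupH hsupφ (fun b p hb' => hdφ b p hb') hb φ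
  · exact fun β φ hb => S9.T0_deriv hμ hHφ hα0.le hsupφ hb φ
  · intro β φ hb
    show H β φ = T0 μ H β φ + ((β / (2*μ) : ℝ)) • (((2*μ/β : ℝ)) • (H β φ - T0 μ H β φ))
    rw [smul_smul, show β/(2*μ)*(2*μ/β) = 1 by
      field_simp, one_smul]
    ring
  · -- norm estimate
    have hα' : α ∈ Set.Ioo (0:ℝ) 1 := ⟨hα0, hα1⟩
    have hTφw : ∀ b φ', 0 < b → jap b ^ α * (b^(2*μ-1) * ‖T0 μ Hφ b φ'‖) ≤ B*X :=
      fun b φ' hb => S9.T0_bound hα' hμ hHφ hsupφ hb φ'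
    have hTHw : ∀ b φ', 0 < b → jap b ^ α * (b^(2*μ-1) * ‖T0 μ H b φ'‖) ≤ B*X :=
      fun b φ' hb => S9.T0_bound hα' hμ hH hsupH hb φ'
    have hid : ∀ (K : ℝ → ℝ → ℂ) b φ', 0 < b →
        (b^(2*μ):ℝ) • ((2*μ/b:ℝ) • (K b φ' - T0 μ K b φ'))
          = (2*μ*b^(2*μ-1):ℝ) • (K b φ' - T0 μ K b φ') := by
      intro K b φ' hb
      rw [smul_smul]
      congr 1
      rw [show (2*μ-1) = 2*μ + (-1) by ring, Real.rpow_add hb, Real.rpow_neg_one]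
      field_simp
    have hc1 : (0:ℝ) ≤ 2*μ*(X + B*X) + (2*μ*X + 2*μ*(3*(MT*X))) := by
      have e1 : (0:ℝ) ≤ B*X := mul_nonneg hBpos.le hXnn
      have e2 : (0:ℝ) ≤ MT*X := mul_nonneg hMTpos.le hXnn
      nlinarith
    have hc3 : (0:ℝ) ≤ B*X + 3*(MT*X) := by
      have e1 : (0:ℝ) ≤ B*X := mul_nonneg hBpos.le hXnn
      have e2 : (0:ℝ) ≤ MT*X := mul_nonneg hMTpos.le hXnn
      nlinarith
    have hwgen : ∀ (K : ℝ → ℝ → ℂ),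
        (∀ b φ', 0 < b → jap b ^ α * (b ^ (2*μ-1) * ‖K b φ'‖) ≤ X) →
        (∀ b φ', 0 < b → jap b ^ α * (b^(2*μ-1) * ‖T0 μ K b φ'‖) ≤ B*X) →
        ∀ b φ', 0 < b →
        jap b ^ α * ‖(b^(2*μ):ℝ) • ((2*μ/b:ℝ) • (K b φ' - T0 μ K b φ'))‖
          ≤ 2*μ*(X + B*X) := by
      intro K hK hTK b φ' hb
      rw [hid K b φ' hb, norm_smul, Real.norm_eq_abs,
        abs_of_nonneg (mul_nonneg (by linarith) (Real.rpow_nonneg hb.le _))]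
      exact S9.smul_diff_bound (Real.rpow_nonneg (jap_pos b).le _)
        (Real.rpow_nonneg hb.le _) (by linarith)
        (norm_sub_le _ _) (hK b φ' hb) (hTK b φ' hb)
    have hqgen : ∀ (K : ℝ → ℝ → ℂ), ContOn2 K →
        (∀ b φ', 0 < b → jap b ^ α * (b ^ (2*μ-1) * ‖K b φ'‖) ≤ X) →
        (∀ φ' b₁ b₂, 0 < b₂ → b₂ < b₁ → b₁ < 2*b₂ → b₁ - b₂ < 1 →
          (b₁+b₂)^α * ‖(b₁^(2*μ-1):ℝ) • K b₁ φ' - (b₂^(2*μ-1):ℝ) • K b₂ φ'‖ / (b₁-b₂)^α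
            ≤ X) →
        ∀ φ' b₁ b₂, 0 < b₂ → b₂ < b₁ → b₁ < 2*b₂ → b₁ - b₂ < 1 →
        (b₁+b₂)^α * ‖(b₁^(2*μ):ℝ) • ((2*μ/b₁:ℝ) • (K b₁ φ' - T0 μ K b₁ φ'))
            - (b₂^(2*μ):ℝ) • ((2*μ/b₂:ℝ) • (K b₂ φ' - T0 μ K b₂ φ'))‖ / (b₁-b₂)^α
          ≤ 2*μ*X + 2*μ*(3*(MT*X)) := by
      intro K hKc hK hKq φ' b₁ b₂ g1 g2 g3 g4
      have h1b : 0 < b₁ := g1.trans g2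
      have hid2 : ∀ b, 0 < b →
          (b^(2*μ):ℝ) • ((2*μ/b:ℝ) • (K b φ' - T0 μ K b φ'))
            = (2*μ:ℝ) • ((b^(2*μ-1):ℝ) • K b φ' - (b^(2*μ-1):ℝ) • T0 μ K b φ') := by
        intro b hb
        rw [hid K b φ' hb, ← smul_sub, smul_smul]
      rw [hid2 b₁ h1b, hid2 b₂ g1, ← smul_sub, norm_smul, Real.norm_eq_abs,
        abs_of_nonneg (by linarith : (0:ℝ) ≤ 2*μ)]
      have hW : ‖((b₁^(2*μ-1):ℝ) • K b₁ φ' - (b₁^(2*μ-1):ℝ) • T0 μ K b₁ φ')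
          - ((b₂^(2*μ-1):ℝ) • K b₂ φ' - (b₂^(2*μ-1):ℝ) • T0 μ K b₂ φ')‖
          ≤ ‖(b₁^(2*μ-1):ℝ) • K b₁ φ' - (b₂^(2*μ-1):ℝ) • K b₂ φ'‖
            + ‖(b₁^(2*μ-1):ℝ) • T0 μ K b₁ φ' - (b₂^(2*μ-1):ℝ) • T0 μ K b₂ φ'‖ := by
        have e : ((b₁^(2*μ-1):ℝ) • K b₁ φ' - (b₁^(2*μ-1):ℝ) • T0 μ K b₁ φ')
            - ((b₂^(2*μ-1):ℝ) • K b₂ φ' - (b₂^(2*μ-1):ℝ) • T0 μ K b₂ φ')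
            = ((b₁^(2*μ-1):ℝ) • K b₁ φ' - (b₂^(2*μ-1):ℝ) • K b₂ φ')
              - ((b₁^(2*μ-1):ℝ) • T0 μ K b₁ φ' - (b₂^(2*μ-1):ℝ) • T0 μ K b₂ φ') := by
          ring
        rw [e]
        exact norm_sub_le _ _
      have hnd : 2*μ * ‖((b₁^(2*μ-1):ℝ) • K b₁ φ' - (b₁^(2*μ-1):ℝ) • T0 μ K b₁ φ')
          - ((b₂^(2*μ-1):ℝ) • K b₂ φ' - (b₂^(2*μ-1):ℝ) • T0 μ K b₂ φ')‖
          ≤ 2*μ * (‖(b₁^(2*μ-1):ℝ) • K b₁ φ' - (b₂^(2*μ-1):ℝ) • K b₂ φ'‖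
            + ‖(b₁^(2*μ-1):ℝ) • T0 μ K b₁ φ' - (b₂^(2*μ-1):ℝ) • T0 μ K b₂ φ'‖) :=
        mul_le_mul_of_nonneg_left hW (by linarith)
      exact S9.Qsum (Real.rpow_nonneg (by linarith : (0:ℝ) ≤ b₁+b₂) α)
        (Real.rpow_pos_of_pos (by linarith : (0:ℝ) < b₁-b₂) α) (by linarith : (0:ℝ) ≤ 2*μ)
        hnd (hKq φ' b₁ b₂ g1 g2 g3 g4)
        (S9.T0_holder hα' hμ hKc hK g1 g2 g3 g4 φ')
    have h1 : CbNorm α (fun β φ => (β^(2*μ):ℝ) •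
          ((2*μ/β:ℝ) • (Hφ β φ - T0 μ Hφ β φ)))
        ≤ ENNReal.ofReal (2*μ*(X + B*X) + (2*μ*X + 2*μ*(3*(MT*X)))) := by
      refine S9.cb_le ?_ ?_ (hwgen Hφ hsupφ hTφw) (hqgen Hφ hHφ hsupφ hqφ)
      · have e1 : (0:ℝ) ≤ B*X := mul_nonneg hBpos.le hXnn
        nlinarith
      · have e2 : (0:ℝ) ≤ MT*X := mul_nonneg hMTpos.le hXnn
        nlinarith
    have h2 : CbNorm α (fun β φ => (β^(2*μ):ℝ) •
          ((2*μ/β:ℝ) • (H β φ - T0 μ H β φ)))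
        ≤ ENNReal.ofReal (2*μ*(X + B*X) + (2*μ*X + 2*μ*(3*(MT*X)))) := by
      refine S9.cb_le ?_ ?_ (hwgen H hsupH hTHw) (hqgen H hH hsupH hqH)
      · have e1 : (0:ℝ) ≤ B*X := mul_nonneg hBpos.le hXnn
        nlinarith
      · have e2 : (0:ℝ) ≤ MT*X := mul_nonneg hMTpos.le hXnn
        nlinarith
    have h3 : CbNorm α (fun β φ => (β^(2*μ-1):ℝ) • T0 μ Hφ β φ)
        ≤ ENNReal.ofReal (B*X + 3*(MT*X)) := by
      refine S9.cb_le (mul_nonneg hBpos.le hXnn)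
        (by nlinarith [mul_nonneg hMTpos.le hXnn]) ?_ ?_
      · intro b φ' hb
        have := hTφw b φ' hb
        rwa [norm_smul, Real.norm_eq_abs, abs_of_nonneg (Real.rpow_nonneg hb.le _)]
      · intro φ' b₁ b₂ g1 g2 g3 g4
        exact S9.T0_holder hα' hμ hHφ hsupφ g1 g2 g3 g4 φ'
    have h4 : CbNorm α (fun β φ => (β^(2*μ-1):ℝ) • T0 μ H β φ)
        ≤ ENNReal.ofReal (B*X + 3*(MT*X)) := by
      refine S9.cb_le (mul_nonneg hBpos.le hXnn)
        (by nlinarith [mul_nonneg hMTpos.le hXnn]) ?_ ?_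
      · intro b φ' hb
        have := hTHw b φ' hb
        rwa [norm_smul, Real.norm_eq_abs, abs_of_nonneg (Real.rpow_nonneg hb.le _)]
      · intro φ' b₁ b₂ g1 g2 g3 g4
        exact S9.T0_holder hα' hμ hH hsupH g1 g2 g3 g4 φ'
    calc CbNorm α (fun β φ => (β ^ (2*μ) : ℝ) •
            (fun β φ => ((2*μ/β : ℝ)) • (Hφ β φ - T0 μ Hφ β φ)) β φ) +
          CbNorm α (fun β φ => (β ^ (2*μ) : ℝ) •
            (fun β φ => ((2*μ/β : ℝ)) • (H β φ - T0 μ H β φ)) β φ) +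
          CbNorm α (fun β φ => (β ^ (2*μ - 1) : ℝ) •
            (fun β φ => T0 μ Hφ β φ) β φ) +
          CbNorm α (fun β φ => (β ^ (2*μ - 1) : ℝ) • T0 μ H β φ)
        ≤ ENNReal.ofReal (2*μ*(X + B*X) + (2*μ*X + 2*μ*(3*(MT*X))))
          + ENNReal.ofReal (2*μ*(X + B*X) + (2*μ*X + 2*μ*(3*(MT*X))))
          + ENNReal.ofReal (B*X + 3*(MT*X)) + ENNReal.ofReal (B*X + 3*(MT*X)) :=
        add_le_add (add_le_add (add_le_add h1 h2) h3) h4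
    _ = ENNReal.ofReal ((2*μ*(X + B*X) + (2*μ*X + 2*μ*(3*(MT*X))))
          + (2*μ*(X + B*X) + (2*μ*X + 2*μ*(3*(MT*X))))
          + (B*X + 3*(MT*X)) + (B*X + 3*(MT*X))) := by
        rw [← ENNReal.ofReal_add hc1 hc1,
          ← ENNReal.ofReal_add (add_nonneg hc1 hc1) hc3,
          ← ENNReal.ofReal_add (add_nonneg (add_nonneg hc1 hc1) hc3) hc3]
    _ ≤ ENNReal.ofReal ((8*μ + 4*μ*B + 12*μ*MT + 2*B + 6*MT + 1) * X) := by
        refine ENNReal.ofReal_le_ofReal ?_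
        nlinarith [hXnn]
    _ = ENNReal.ofReal (8*μ + 4*μ*B + 12*μ*MT + 2*B + 6*MT + 1) * ENNReal.ofReal X := by
        refine ENNReal.ofReal_mul ?_
        nlinarith [mul_nonneg (show (0:ℝ) ≤ μ by linarith) hBpos.le,
          mul_nonneg (show (0:ℝ) ≤ μ by linarith) hMTpos.le]
    _ = ENNReal.ofReal (8*μ + 4*μ*B + 12*μ*MT + 2*B + 6*MT + 1) * X0Norm α μ H Hβ Hφ := by
        rw [hXdef, ENNReal.ofReal_toReal hN.ne]
  · -- uniqueness
    rintro G Gβ hGd ⟨M, hGM⟩ hid' β φ hβ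
    have hα' : α ∈ Set.Ioo (0:ℝ) 1 := ⟨hα0, hα1⟩
    have hMnn : 0 ≤ M := le_trans (norm_nonneg _) (hGM 1 φ one_pos)
    have hu0 : ∀ b, 0 < b →
        HasDerivAt (fun x => (x^(2*μ):ℝ) • (G x φ - T0 μ H x φ)) 0 b := by
      intro b hb
      have hT := S9.T0_deriv hμ hH hα0.le hsupH hb φ
      have hd : HasDerivAt (fun x => G x φ - T0 μ H x φ)
          (Gβ b φ - (2*μ/b:ℝ) • (H b φ - T0 μ H b φ)) b := (hGd b φ hb).sub hT
      have hs := (Real.hasDerivAt_rpow_const (p := 2*μ) (Or.inl hb.ne')).smul hd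
      have hsub : ((b/(2*μ)):ℝ) • Gβ b φ = H b φ - G b φ := by
        rw [hid' b φ hb, add_sub_cancel_left]
      have hGβ : (2*μ/b : ℝ) • (H b φ - G b φ) = Gβ b φ := by
        rw [← hsub, smul_smul, show (2*μ/b)*(b/(2*μ)) = 1 by field_simp, one_smul]
      convert hs using 1
      · rfl
      · rfl
      rw [← hGβ]
      have kr : b^(2*μ-1) * b = b^(2*μ) := by
        rw [← Real.rpow_add_one hb.ne']
        norm_num
      have K : ((b^(2*μ):ℝ):ℂ) = ((b^(2*μ-1):ℝ):ℂ) * (b:ℂ) := by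
        rw [← Complex.ofReal_mul, kr]
      have hbC : (b:ℂ) ≠ 0 := Complex.ofReal_ne_zero.2 hb.ne'
      simp only [Complex.real_smul, Complex.ofReal_mul, Complex.ofReal_div,
        Complex.ofReal_ofNat]
      rw [K]
      field_simp
      ring
    have hueq : ∀ ε, ε ∈ Ioc (0:ℝ) β →
        (β^(2*μ):ℝ) • (G β φ - T0 μ H β φ) = (ε^(2*μ):ℝ) • (G ε φ - T0 μ H ε φ) := by
      intro ε hε
      have hcont : ContinuousOn (fun x => (x^(2*μ):ℝ) • (G x φ - T0 μ H x φ)) (Icc ε β) :=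
        fun x hx => ((hu0 x (lt_of_lt_of_le hε.1 hx.1)).continuousAt).continuousWithinAt
      have hder : ∀ x ∈ Ico ε β,
          HasDerivWithinAt (fun x => (x^(2*μ):ℝ) • (G x φ - T0 μ H x φ)) 0 (Ici x) x :=
        fun x hx => (hu0 x (lt_of_lt_of_le hε.1 hx.1)).hasDerivWithinAt
      exact constant_of_has_deriv_right_zero hcont hder β (right_mem_Icc.2 hε.2)
    have hlim0 : Tendsto (fun ε => (ε^(2*μ):ℝ) • (G ε φ - T0 μ H ε φ))
        (𝓝[>] (0:ℝ)) (𝓝 0) := by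
      apply squeeze_zero_norm' (a := fun ε => (M + B*X) * ε)
      · filter_upwards [self_mem_nhdsWithin] with ε hε
        have hε0 : 0 < ε := hε
        have hG1 : ε^(2*μ-1) * ‖G ε φ‖ ≤ M := by
          have h := hGM ε φ hε0
          rwa [norm_smul, Real.norm_eq_abs,
            abs_of_nonneg (Real.rpow_nonneg hε0.le _)] at h
        have hT1 : ε^(2*μ-1) * ‖T0 μ H ε φ‖ ≤ B*X :=
          S9.T0_bound' hα' hμ hH hsupH hε0 φ
        have k : ε^(2*μ) = ε^(2*μ-1) * ε := by
          rw [← Real.rpow_add_one hε0.ne']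
          norm_num
        calc ‖(ε^(2*μ):ℝ) • (G ε φ - T0 μ H ε φ)‖
            = ε^(2*μ) * ‖G ε φ - T0 μ H ε φ‖ := by
              rw [norm_smul, Real.norm_eq_abs,
                abs_of_nonneg (Real.rpow_nonneg hε0.le _)]
          _ ≤ ε^(2*μ) * (‖G ε φ‖ + ‖T0 μ H ε φ‖) :=
              mul_le_mul_of_nonneg_left (norm_sub_le _ _) (Real.rpow_nonneg hε0.le _)
          _ = (ε^(2*μ-1) * ‖G ε φ‖ + ε^(2*μ-1) * ‖T0 μ H ε φ‖) * ε := by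
              rw [k]; ring
          _ ≤ (M + B*X) * ε :=
              mul_le_mul_of_nonneg_right (add_le_add hG1 hT1) hε0.le
      · have hcont : Tendsto (fun ε : ℝ => (M + B*X) * ε) (𝓝 0) (𝓝 ((M + B*X) * 0)) :=
          (continuous_const.mul continuous_id).tendsto 0
        rw [mul_zero] at hcont
        exact hcont.mono_left nhdsWithin_le_nhds
    have hconst : Tendsto (fun ε => (ε^(2*μ):ℝ) • (G ε φ - T0 μ H ε φ))
        (𝓝[>] (0:ℝ)) (𝓝 ((β^(2*μ):ℝ) • (G β φ - T0 μ H β φ))) := by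
      refine Tendsto.congr' ?_ tendsto_const_nhds
      filter_upwards [Ioc_mem_nhdsGT hβ] with ε hε
      exact hueq ε hε
    have huβ : (β^(2*μ):ℝ) • (G β φ - T0 μ H β φ) = 0 :=
      tendsto_nhds_unique hconst hlim0
    have hne : (β^(2*μ):ℝ) ≠ 0 := (Real.rpow_pos_of_pos hβ _).ne'
    rcases smul_eq_zero.1 huβ with h | h
    · exact absurd h hne
    · exact sub_eq_zero.1 h
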